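/- arXiv:1003.4110 — 5 statements merged into one kernel-verified Lean document; each statement's English description precedes it below -/
import Mathlib

section
/- Let $p\geq 1$ be an integer. Then there exists a constant $K_p$ (one may take $K_p = 2\big(1+\Gamma(\tfrac1p+1)+\cdots+\Gamma(\tfrac{p-1}{p}+1)\big)+2p$) such that for every $n\in\mathbb{N}$, $\sum_{\nu=0}^n \Gamma\big(\tfrac{n-\nu}{p}+1\big)\,\Gamma\big(\tfrac{\nu}{p}+1\big)\ \leq\ K_p\,\Gamma\big(\tfrac{n}{p}+1\big)$. -/
/-
Write `G m = Γ(m/p + 1)`. Convexity of `Γ` and of `log Γ` on `(0, ∞)`, together with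
`Γ 1 = Γ 2 = 1`, gives `Γ ≤ 1` on `[1, 2]`, monotonicity of `Γ` on `[2, ∞)`, and
`Γ x Γ y ≤ Γ (x + y - 2)` for `x, y ≥ 2`. If `n < p`, every term of the sum is at most `1` while
`G n ≥ 1/2`. If `n ≥ p`, each of the `p` terms with `ν < p` is at most `G n · G ν`, and by the
symmetry `ν ↦ n - ν` so is each of the `p` terms with `n - ν < p`; each of the at most `n`
remaining terms is at most `Γ(n/p) = (p/n) G n`.
-/

open Real Finset

theorem ConvexOn.map_add_map_le_of_add_eq {𝕜 β : Type*} [Field 𝕜] [LinearOrder 𝕜]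
    [IsStrictOrderedRing 𝕜] [AddCommGroup β] [PartialOrder β] [IsOrderedAddMonoid β]
    [Module 𝕜 β] {s : Set 𝕜} {f : 𝕜 → β} (hf : ConvexOn 𝕜 s f) {a b x y : 𝕜}
    (ha : a ∈ s) (hb : b ∈ s) (hax : a ≤ x) (hxb : x ≤ b) (hxy : x + y = a + b) :
    f x + f y ≤ f a + f b := by
  obtain rfl : y = a + b - x := by linear_combination hxy
  obtain rfl | hab := (hax.trans hxb).eq_or_lt
  · obtain rfl : x = a := le_antisymm hxb hax
    rw [add_sub_cancel_right]
  have hba : 0 < b - a := sub_pos.2 hab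
  have hc : 0 ≤ (b - x) / (b - a) := div_nonneg (sub_nonneg.2 hxb) hba.le
  have hd : 0 ≤ (x - a) / (b - a) := div_nonneg (sub_nonneg.2 hax) hba.le
  have hsum : (b - x) / (b - a) + (x - a) / (b - a) = 1 := by field_simp; ring
  have hfx := hf.2 ha hb hc hd hsum
  have hfy := hf.2 ha hb hd hc (by rw [add_comm, hsum])
  rw [show ((b - x) / (b - a)) • a + ((x - a) / (b - a)) • b = x by
    simp only [smul_eq_mul]; field_simp; ring] at hfx
  rw [show ((x - a) / (b - a)) • a + ((b - x) / (b - a)) • b = a + b - x by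
    simp only [smul_eq_mul]; field_simp; ring] at hfy
  calc f x + f (a + b - x) ≤ ((b - x) / (b - a) + (x - a) / (b - a)) • f a
        + ((b - x) / (b - a) + (x - a) / (b - a)) • f b := by
          simp only [add_smul]; convert add_le_add hfx hfy using 1; abel
    _ = f a + f b := by rw [hsum, one_smul, one_smul]

namespace Real

theorem Gamma_le_one_of_mem_Icc {x : ℝ} (hx : x ∈ Set.Icc 1 2) : Gamma x ≤ 1 := by
  simpa [Gamma_two] using
    convexOn_Gamma.le_max_of_mem_Icc (by norm_num : (1 : ℝ) ∈ Set.Ioi 0) (by norm_num) hx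

theorem one_le_Gamma_of_two_le {x : ℝ} (hx : 2 ≤ x) : 1 ≤ Gamma x :=
  Gamma_two ▸ Gamma_strictMonoOn_Ici.monotoneOn (Set.mem_Ici.2 le_rfl) hx hx

theorem Gamma_le_Gamma_of_le {z w : ℝ} (hz : 1 ≤ z) (hzw : z ≤ w) (hw : 2 ≤ w) :
    Gamma z ≤ Gamma w := by
  rcases le_total z 2 with hz2 | hz2
  · exact (Gamma_le_one_of_mem_Icc ⟨hz, hz2⟩).trans (one_le_Gamma_of_two_le hw)
  · exact Gamma_strictMonoOn_Ici.monotoneOn hz2 hw hzw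

theorem inv_le_Gamma {x : ℝ} (hx : 1 ≤ x) : x⁻¹ ≤ Gamma x := by
  have hx0 : 0 < x := by linarith
  rw [inv_le_iff_one_le_mul₀ hx0, mul_comm, ← Gamma_add_one hx0.ne']
  exact one_le_Gamma_of_two_le (by linarith)

theorem Gamma_mul_Gamma_le {x y : ℝ} (hx : 2 ≤ x) (hy : 2 ≤ y) :
    Gamma x * Gamma y ≤ Gamma (x + y - 2) := by
  have hpos : ∀ {z : ℝ}, 2 ≤ z → 0 < Gamma z := fun hz => Gamma_pos_of_pos (by linarith)
  have hlog := convexOn_log_Gamma.map_add_map_le_of_add_eq (a := 2) (b := x + y - 2) (x := x)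
    (y := y) (by norm_num) (by simp; linarith) hx (by linarith) (by ring)
  simp only [Function.comp_apply, Gamma_two, log_one, zero_add] at hlog
  rw [← log_mul (hpos hx).ne' (hpos hy).ne'] at hlog
  exact (log_le_log_iff (mul_pos (hpos hx) (hpos hy)) (hpos (by linarith))).1 hlog

end Real

theorem Finset.sum_range_succ_le_sum_range_add_sum_Icc_add_sum_range_sub {M : Type*}
    [AddCommMonoid M] [PartialOrder M] [IsOrderedAddMonoid M] {f : ℕ → M} (hf : ∀ k, 0 ≤ f k)
    (p n : ℕ) :
    ∑ k ∈ range (n + 1), f k ≤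
      ∑ k ∈ range p, f k + ∑ k ∈ Icc p (n - p), f k + ∑ k ∈ range p, f (n - k) := by
  have hcover : range (n + 1) ⊆ range p ∪ Icc p (n - p) ∪ (range p).image (n - ·) := by
    intro k hk
    simp only [mem_union, mem_range, mem_Icc, mem_image] at hk ⊢
    by_cases h : k < p ∨ p ≤ k ∧ k ≤ n - p
    · tauto
    · exact Or.inr ⟨n - k, by omega, by omega⟩
  have hunion : ∀ s t : Finset ℕ, ∑ k ∈ s ∪ t, f k ≤ ∑ k ∈ s, f k + ∑ k ∈ t, f k := fun s t =>
    sum_union_inter (f := f) ▸ le_add_of_nonneg_right (sum_nonneg fun k _ => hf k)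
  calc ∑ k ∈ range (n + 1), f k
      ≤ ∑ k ∈ range p ∪ Icc p (n - p) ∪ (range p).image (n - ·), f k :=
        sum_le_sum_of_subset_of_nonneg hcover fun k _ _ => hf k
    _ ≤ ∑ k ∈ range p, f k + ∑ k ∈ Icc p (n - p), f k + ∑ k ∈ (range p).image (n - ·), f k :=
        (hunion _ _).trans (add_le_add_left (hunion _ _) _)
    _ ≤ _ := add_le_add_right (sum_image_le_of_nonneg fun k _ => hf k) _

noncomputable def fracFactorial (p m : ℕ) : ℝ := Gamma ((m : ℝ) / p + 1)

section fracFactorial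

variable {p m n : ℕ}

lemma one_le_natCast_div_add_one (p m : ℕ) : (1 : ℝ) ≤ (m : ℝ) / p + 1 :=
  le_add_of_nonneg_left (by positivity)

lemma two_le_natCast_div_add_one (hp : 0 < p) (hm : p ≤ m) : (2 : ℝ) ≤ (m : ℝ) / p + 1 := by
  have : (1 : ℝ) ≤ (m : ℝ) / p := (one_le_div (by positivity)).2 (by exact_mod_cast hm)
  linarith

lemma fracFactorial_pos (p m : ℕ) : 0 < fracFactorial p m :=
  Gamma_pos_of_pos (by linarith [one_le_natCast_div_add_one p m])

lemma natCast_div_add_one_le_two (hm : m ≤ p) : (m : ℝ) / p + 1 ≤ 2 := by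
  have : (m : ℝ) / p ≤ 1 := div_le_one_of_le₀ (by exact_mod_cast hm) p.cast_nonneg
  linarith

lemma fracFactorial_le_one (hm : m ≤ p) : fracFactorial p m ≤ 1 :=
  Gamma_le_one_of_mem_Icc ⟨one_le_natCast_div_add_one p m, natCast_div_add_one_le_two hm⟩

lemma inv_two_le_fracFactorial (hm : m ≤ p) : 2⁻¹ ≤ fracFactorial p m :=
  (inv_anti₀ (by positivity) (natCast_div_add_one_le_two hm)).trans
    (inv_le_Gamma (one_le_natCast_div_add_one p m))

lemma fracFactorial_le_fracFactorial (hp : 0 < p) (hmn : m ≤ n) (hpn : p ≤ n) :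
    fracFactorial p m ≤ fracFactorial p n :=
  Gamma_le_Gamma_of_le (one_le_natCast_div_add_one p m) (by gcongr)
    (two_le_natCast_div_add_one hp hpn)

lemma fracFactorial_mul_fracFactorial_le (hp : 0 < p) (hm : p ≤ m) (hn : p ≤ n) :
    fracFactorial p m * fracFactorial p n ≤ Gamma (((m + n : ℕ) : ℝ) / p) :=
  (Gamma_mul_Gamma_le (two_le_natCast_div_add_one hp hm)
    (two_le_natCast_div_add_one hp hn)).trans_eq (by push_cast; ring_nf)

lemma natCast_mul_Gamma_div (hp : 0 < p) (hn : 0 < n) :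
    n * Gamma ((n : ℝ) / p) = p * fracFactorial p n := by
  rw [fracFactorial, Gamma_add_one (by positivity)]
  field_simp

lemma fracFactorial_zero (p : ℕ) : fracFactorial p 0 = 1 := by
  simp [fracFactorial]

lemma sum_range_fracFactorial (hp : 0 < p) :
    ∑ k ∈ range p, fracFactorial p k = 1 + ∑ k ∈ Icc 1 (p - 1), fracFactorial p k := by
  obtain ⟨q, rfl⟩ : ∃ q, p = q + 1 := ⟨p - 1, by omega⟩
  rw [sum_range_succ', fracFactorial_zero, add_comm, Nat.add_sub_cancel, range_eq_Ico,
    sum_Ico_add', zero_add, Ico_add_one_right_eq_Icc]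

lemma sum_range_fracFactorial_sub_mul_le_of_lt (hn : n < p) :
    ∑ ν ∈ range (n + 1), fracFactorial p (n - ν) * fracFactorial p ν ≤
      2 * p * fracFactorial p n :=
  calc ∑ ν ∈ range (n + 1), fracFactorial p (n - ν) * fracFactorial p ν
      ≤ ∑ ν ∈ range (n + 1), 1 := sum_le_sum fun ν hν => by
        rw [mem_range] at hν
        exact mul_le_one₀ (fracFactorial_le_one (by omega)) (fracFactorial_pos p ν).le
          (fracFactorial_le_one (by omega))
    _ ≤ p := by simpa using (by exact_mod_cast hn : (n : ℝ) + 1 ≤ p)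
    _ = 2 * p * 2⁻¹ := by ring
    _ ≤ 2 * p * fracFactorial p n := by gcongr; exact inv_two_le_fracFactorial hn.le

lemma sum_range_fracFactorial_sub_mul_le_mul_sum (hp : 0 < p) (hpn : p ≤ n) :
    ∑ ν ∈ range p, fracFactorial p (n - ν) * fracFactorial p ν ≤
      fracFactorial p n * ∑ ν ∈ range p, fracFactorial p ν := by
  rw [mul_sum]
  exact sum_le_sum fun ν _ => mul_le_mul_of_nonneg_right
    (fracFactorial_le_fracFactorial hp (n.sub_le ν) hpn) (fracFactorial_pos p ν).le

lemma sum_Icc_fracFactorial_sub_mul_le (hp : 0 < p) (hpn : p ≤ n) :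
    ∑ ν ∈ Icc p (n - p), fracFactorial p (n - ν) * fracFactorial p ν ≤ p * fracFactorial p n := by
  have hterm : ∀ ν ∈ Icc p (n - p), fracFactorial p (n - ν) * fracFactorial p ν ≤
      Gamma ((n : ℝ) / p) := fun ν hν => by
    rw [mem_Icc] at hν
    simpa [Nat.sub_add_cancel (by omega : ν ≤ n)] using
      fracFactorial_mul_fracFactorial_le hp (by omega : p ≤ n - ν) hν.1
  have hcard : (#(Icc p (n - p)) : ℝ) ≤ n := by
    rw [Nat.card_Icc]; exact_mod_cast (by omega : n - p + 1 - p ≤ n)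
  calc ∑ ν ∈ Icc p (n - p), fracFactorial p (n - ν) * fracFactorial p ν
      ≤ #(Icc p (n - p)) * Gamma ((n : ℝ) / p) := by
        simpa only [nsmul_eq_mul] using sum_le_card_nsmul _ _ _ hterm
    _ ≤ n * Gamma ((n : ℝ) / p) := by gcongr
    _ = p * fracFactorial p n := natCast_mul_Gamma_div hp (by omega)

lemma sum_range_fracFactorial_sub_mul_le_of_le (hp : 0 < p) (hpn : p ≤ n) :
    ∑ ν ∈ range (n + 1), fracFactorial p (n - ν) * fracFactorial p ν ≤
      (2 * ∑ k ∈ range p, fracFactorial p k + p) * fracFactorial p n := by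
  have hsymm : ∑ ν ∈ range p, fracFactorial p (n - (n - ν)) * fracFactorial p (n - ν) =
      ∑ ν ∈ range p, fracFactorial p (n - ν) * fracFactorial p ν :=
    sum_congr rfl fun ν hν => by
      rw [Nat.sub_sub_self (by rw [mem_range] at hν; omega), mul_comm]
  calc ∑ ν ∈ range (n + 1), fracFactorial p (n - ν) * fracFactorial p ν
      ≤ 2 * ∑ ν ∈ range p, fracFactorial p (n - ν) * fracFactorial p ν +
          ∑ ν ∈ Icc p (n - p), fracFactorial p (n - ν) * fracFactorial p ν := by
        have := sum_range_succ_le_sum_range_add_sum_Icc_add_sum_range_sub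
          (fun ν => (mul_pos (fracFactorial_pos p (n - ν)) (fracFactorial_pos p ν)).le) p n
        rw [hsymm] at this
        linarith
    _ ≤ 2 * (fracFactorial p n * ∑ k ∈ range p, fracFactorial p k) + p * fracFactorial p n := by
        gcongr
        · exact sum_range_fracFactorial_sub_mul_le_mul_sum hp hpn
        · exact sum_Icc_fracFactorial_sub_mul_le hp hpn
    _ = (2 * ∑ k ∈ range p, fracFactorial p k + p) * fracFactorial p n := by ring

lemma sum_range_fracFactorial_sub_mul_le (hp : 0 < p) (n : ℕ) :
    ∑ ν ∈ range (n + 1), fracFactorial p (n - ν) * fracFactorial p ν ≤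
      (2 * ∑ k ∈ range p, fracFactorial p k + 2 * p) * fracFactorial p n := by
  have hsum : 0 ≤ ∑ k ∈ range p, fracFactorial p k :=
    sum_nonneg fun k _ => (fracFactorial_pos p k).le
  rcases lt_or_ge n p with hnp | hpn
  · exact (sum_range_fracFactorial_sub_mul_le_of_lt hnp).trans
      (mul_le_mul_of_nonneg_right (by linarith) (fracFactorial_pos p n).le)
  · exact (sum_range_fracFactorial_sub_mul_le_of_le hp hpn).trans
      (mul_le_mul_of_nonneg_right (by linarith) (fracFactorial_pos p n).le)

end fracFactorial

theorem stmt5 (p : ℕ) (hp : 1 ≤ p) :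
    ∀ n : ℕ, ∑ ν ∈ Finset.range (n + 1),
        Real.Gamma (((n - ν : ℕ) : ℝ) / p + 1) * Real.Gamma ((ν : ℝ) / p + 1)
      ≤ (2 * (1 + ∑ k ∈ Finset.Icc 1 (p - 1), Real.Gamma ((k : ℝ) / p + 1)) + 2 * p) *
        Real.Gamma ((n : ℝ) / p + 1) := by
  intro n
  have h := sum_range_fracFactorial_sub_mul_le hp n
  rwa [sum_range_fracFactorial hp] at h
end

section
/- Let $p\geq 1$ be an integer and let $(a_n)$, $(b_n)$ be sequences of complex numbers such that $|a_n|\leq C_1 L_1^n\,\Gamma(\tfrac{n}{p}+1)$ and $|b_n|\leq C_2 L_2^n\,\Gamma(\tfrac{n}{p}+1)$ for all $n$, with positive constants $C_1,C_2,L_1,L_2$. Then the Cauchy product $c_n=\sum_{\nu=0}^n a_\nu b_{n-\nu}$ satisfies $|c_n|\leq K_p\,C_1 C_2\,\max(L_1,L_2)^n\,\Gamma(\tfrac{n}{p}+1)$ for all $n$, where $K_p$ is a constant depending only on $p$. -/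
/-!
Write `Γ(x+1)Γ(y+1) = (x+y+1) Γ(x+y+1) B(x+1, y+1)`. For `0 ≤ x ≤ y` the Beta integrand
satisfies `t^x (1-t)^y ≤ (t(1-t))^(x/2) (1-t)^(y-x/2) ≤ 2^(-x) (1-t)^(y-x/2)`, whence
`Γ(x+1)Γ(y+1) ≤ 4 · 2^(-min x y) · Γ(x+y+1)`. For `x = ν/p`, `y = (n-ν)/p` the factors
`2^(-ν/p)` form a geometric series, so `∑ Γ(ν/p+1)Γ((n-ν)/p+1) ≤ K_p Γ(n/p+1)` with
`K_p = 8 / (1 - 2^(-1/p))`, and the Cauchy product is then bounded term by term.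
-/

open Finset intervalIntegral

namespace Real

theorem Gamma_mul_Gamma_eq_Gamma_add_mul_integral {a b : ℝ} (ha : 0 < a) (hb : 0 < b) :
    Gamma a * Gamma b
      = Gamma (a + b) * ∫ t in (0 : ℝ)..1, t ^ (a - 1) * (1 - t) ^ (b - 1) := by
  have h := Complex.Gamma_mul_Gamma_eq_betaIntegral (s := a) (t := b)
    (by rwa [Complex.ofReal_re]) (by rwa [Complex.ofReal_re])
  have hβ : Complex.betaIntegral a b
      = ((∫ t in (0 : ℝ)..1, t ^ (a - 1) * (1 - t) ^ (b - 1) : ℝ) : ℂ) := by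
    rw [← intervalIntegral.integral_ofReal, Complex.betaIntegral]
    refine integral_congr fun t ht => ?_
    rw [Set.uIcc_of_le zero_le_one] at ht
    simp only [Complex.ofReal_mul, Complex.ofReal_cpow ht.1,
      Complex.ofReal_cpow (sub_nonneg.2 ht.2)]
    push_cast
    rfl
  rw [hβ, ← Complex.ofReal_add, Complex.Gamma_ofReal, Complex.Gamma_ofReal,
    Complex.Gamma_ofReal] at h
  exact_mod_cast h

theorem integral_one_sub_rpow {s : ℝ} (hs : -1 < s) :
    ∫ t in (0 : ℝ)..1, (1 - t) ^ s = 1 / (s + 1) := by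
  rw [integral_comp_sub_left (fun t => t ^ s), sub_self, sub_zero, integral_rpow (.inl hs),
    one_rpow, zero_rpow (by linarith), sub_zero]

theorem rpow_mul_one_sub_rpow_le {x y t : ℝ} (hx : 0 ≤ x) (hxy : x ≤ y) (ht₀ : 0 ≤ t)
    (ht₁ : t ≤ 1) : t ^ x * (1 - t) ^ y ≤ 2 ^ (-x) * (1 - t) ^ (y - x / 2) := by
  have hs : 0 ≤ 1 - t := sub_nonneg.2 ht₁
  have hquarter : (t * (1 - t)) ^ (x / 2) ≤ 2 ^ (-x) :=
    calc (t * (1 - t)) ^ (x / 2) ≤ (2 ^ (2 : ℝ))⁻¹ ^ (x / 2) := by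
          gcongr
          norm_num
          nlinarith [sq_nonneg (t - 1 / 2)]
      _ = 2 ^ (-x) := by
          rw [inv_rpow (by positivity), ← rpow_mul zero_le_two, ← rpow_neg zero_le_two]
          ring_nf
  calc t ^ x * (1 - t) ^ y = t ^ x * (1 - t) ^ (x / 2) * (1 - t) ^ (y - x / 2) := by
        rw [mul_assoc, ← rpow_add_of_nonneg hs (by positivity) (by linarith)]
        ring_nf
    _ ≤ t ^ (x / 2) * (1 - t) ^ (x / 2) * (1 - t) ^ (y - x / 2) := by
        have : t ^ x ≤ t ^ (x / 2) :=
          rpow_le_rpow_of_exponent_ge' ht₀ ht₁ (by positivity) (by linarith)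
        gcongr
    _ = (t * (1 - t)) ^ (x / 2) * (1 - t) ^ (y - x / 2) := by rw [mul_rpow ht₀ hs]
    _ ≤ 2 ^ (-x) * (1 - t) ^ (y - x / 2) := by gcongr

theorem integral_rpow_mul_one_sub_rpow_le {x y : ℝ} (hx : 0 ≤ x) (hxy : x ≤ y) :
    ∫ t in (0 : ℝ)..1, t ^ x * (1 - t) ^ y ≤ 2 ^ (-x) / (y - x / 2 + 1) := by
  have hcont : ∀ {s : ℝ}, 0 ≤ s → Continuous fun t : ℝ => (1 - t) ^ s := fun hs =>
    (continuous_rpow_const hs).comp (continuous_const.sub continuous_id)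
  calc ∫ t in (0 : ℝ)..1, t ^ x * (1 - t) ^ y
      ≤ ∫ t in (0 : ℝ)..1, 2 ^ (-x) * (1 - t) ^ (y - x / 2) :=
        integral_mono_on zero_le_one
          (((continuous_rpow_const hx).mul (hcont (hx.trans hxy))).intervalIntegrable 0 1)
          ((continuous_const.mul (hcont (by linarith))).intervalIntegrable 0 1)
          fun t ht => rpow_mul_one_sub_rpow_le hx hxy ht.1 ht.2
    _ = 2 ^ (-x) / (y - x / 2 + 1) := by
        rw [integral_const_mul, integral_one_sub_rpow (by linarith), mul_one_div]

theorem Gamma_add_one_mul_Gamma_add_one_le_of_le {x y : ℝ} (hx : 0 ≤ x) (hxy : x ≤ y) :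
    Gamma (x + 1) * Gamma (y + 1) ≤ 4 * 2 ^ (-x) * Gamma (x + y + 1) := by
  have hΓ : 0 < Gamma (x + y + 1) := Gamma_pos_of_pos (by linarith)
  have hratio : (x + y + 1) / (y - x / 2 + 1) ≤ 4 := by
    rw [div_le_iff₀ (by linarith)]
    linarith
  rw [Gamma_mul_Gamma_eq_Gamma_add_mul_integral (by linarith) (by linarith),
    add_sub_cancel_right, add_sub_cancel_right, show x + 1 + (y + 1) = x + y + 1 + 1 by ring,
    Gamma_add_one (by linarith)]
  calc (x + y + 1) * Gamma (x + y + 1) * ∫ t in (0 : ℝ)..1, t ^ x * (1 - t) ^ y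
      ≤ (x + y + 1) * Gamma (x + y + 1) * (2 ^ (-x) / (y - x / 2 + 1)) :=
        mul_le_mul_of_nonneg_left (integral_rpow_mul_one_sub_rpow_le hx hxy)
          (mul_nonneg (by linarith) hΓ.le)
    _ = (x + y + 1) / (y - x / 2 + 1) * (2 ^ (-x) * Gamma (x + y + 1)) := by ring
    _ ≤ 4 * 2 ^ (-x) * Gamma (x + y + 1) := by
        rw [mul_assoc]
        gcongr

theorem Gamma_add_one_mul_Gamma_add_one_le {x y : ℝ} (hx : 0 ≤ x) (hy : 0 ≤ y) :
    Gamma (x + 1) * Gamma (y + 1) ≤ 4 * (2 ^ (-x) + 2 ^ (-y)) * Gamma (x + y + 1) := by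
  have hΓ : 0 ≤ Gamma (x + y + 1) := (Gamma_pos_of_pos (by linarith)).le
  rcases le_total x y with hxy | hyx
  · calc Gamma (x + 1) * Gamma (y + 1) ≤ 4 * 2 ^ (-x) * Gamma (x + y + 1) :=
          Gamma_add_one_mul_Gamma_add_one_le_of_le hx hxy
      _ ≤ 4 * (2 ^ (-x) + 2 ^ (-y)) * Gamma (x + y + 1) := by
          gcongr
          exact le_add_of_nonneg_right (by positivity)
  · calc Gamma (x + 1) * Gamma (y + 1) ≤ 4 * 2 ^ (-y) * Gamma (y + x + 1) := by
          rw [mul_comm]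
          exact Gamma_add_one_mul_Gamma_add_one_le_of_le hy hyx
      _ ≤ 4 * (2 ^ (-x) + 2 ^ (-y)) * Gamma (x + y + 1) := by
          rw [add_comm y x]
          gcongr
          exact le_add_of_nonneg_left (by positivity)

theorem sum_range_Gamma_mul_Gamma_le {p : ℝ} (hp : 0 < p) (n : ℕ) :
    ∑ ν ∈ range (n + 1), Gamma ((ν : ℝ) / p + 1) * Gamma (((n - ν : ℕ) : ℝ) / p + 1)
      ≤ 8 / (1 - 2 ^ (-1 / p)) * Gamma ((n : ℝ) / p + 1) := by
  set q : ℝ := 2 ^ (-1 / p)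
  have hq₀ : 0 < q := by positivity
  have hq₁ : q < 1 := rpow_lt_one_of_one_lt_of_neg one_lt_two (by rw [neg_div]; simpa)
  have hpow (m : ℕ) : (2 : ℝ) ^ (-((m : ℝ) / p)) = q ^ m := by
    rw [← rpow_natCast, ← rpow_mul zero_le_two]
    ring_nf
  have hterm (ν : ℕ) (hν : ν ∈ range (n + 1)) :
      Gamma ((ν : ℝ) / p + 1) * Gamma (((n - ν : ℕ) : ℝ) / p + 1)
        ≤ 4 * Gamma ((n : ℝ) / p + 1) * (q ^ ν + q ^ (n - ν)) := by
    have hsum : (ν : ℝ) / p + ((n - ν : ℕ) : ℝ) / p = (n : ℝ) / p := by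
      rw [← add_div, Nat.cast_sub (mem_range_succ_iff.1 hν), add_sub_cancel]
    have := Gamma_add_one_mul_Gamma_add_one_le (x := (ν : ℝ) / p)
      (y := ((n - ν : ℕ) : ℝ) / p) (by positivity) (by positivity)
    rwa [hsum, hpow, hpow, mul_right_comm] at this
  have hreflect : ∑ ν ∈ range (n + 1), q ^ (n - ν) = ∑ ν ∈ range (n + 1), q ^ ν := by
    rw [← sum_range_reflect]
    exact sum_congr rfl fun ν hν => by
      rw [Nat.add_sub_cancel, Nat.sub_sub_self (mem_range_succ_iff.1 hν)]
  calc ∑ ν ∈ range (n + 1), Gamma ((ν : ℝ) / p + 1) * Gamma (((n - ν : ℕ) : ℝ) / p + 1)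
      ≤ ∑ ν ∈ range (n + 1), 4 * Gamma ((n : ℝ) / p + 1) * (q ^ ν + q ^ (n - ν)) :=
        sum_le_sum hterm
    _ = 8 * Gamma ((n : ℝ) / p + 1) * ∑ ν ∈ range (n + 1), q ^ ν := by
        rw [← mul_sum, sum_add_distrib, hreflect]
        ring
    _ ≤ 8 * Gamma ((n : ℝ) / p + 1) * (1 / (1 - q)) := by
        have hgeom : ∑ ν ∈ range (n + 1), q ^ ν ≤ 1 / (1 - q) := by
          simpa only [range_eq_Ico, pow_zero] using
            geom_sum_Ico_le_of_lt_one (m := 0) (n := n + 1) hq₀.le hq₁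
        have : 0 < Gamma ((n : ℝ) / p + 1) := Gamma_pos_of_pos (by positivity)
        exact mul_le_mul_of_nonneg_left hgeom (by positivity)
    _ = 8 / (1 - q) * Gamma ((n : ℝ) / p + 1) := by ring

end Real

theorem norm_sum_range_mul_le {R : Type*} [SeminormedRing R] {a b : ℕ → R} {g : ℕ → ℝ}
    {C₁ C₂ L₁ L₂ K : ℝ} {n : ℕ} (hg : ∀ m, 0 ≤ g m) (hC₁ : 0 ≤ C₁) (hC₂ : 0 ≤ C₂)
    (hL₁ : 0 ≤ L₁) (hL₂ : 0 ≤ L₂) (ha : ∀ m, ‖a m‖ ≤ C₁ * L₁ ^ m * g m)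
    (hb : ∀ m, ‖b m‖ ≤ C₂ * L₂ ^ m * g m)
    (hK : ∑ ν ∈ range (n + 1), g ν * g (n - ν) ≤ K * g n) :
    ‖∑ ν ∈ range (n + 1), a ν * b (n - ν)‖ ≤ K * C₁ * C₂ * max L₁ L₂ ^ n * g n := by
  set M := max L₁ L₂
  have hterm (ν : ℕ) (hν : ν ∈ range (n + 1)) :
      ‖a ν * b (n - ν)‖ ≤ C₁ * C₂ * M ^ n * (g ν * g (n - ν)) := by
    have hL : L₁ ^ ν * L₂ ^ (n - ν) ≤ M ^ n := by
      calc L₁ ^ ν * L₂ ^ (n - ν) ≤ M ^ ν * M ^ (n - ν) := by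
            gcongr
            exacts [le_max_left _ _, le_max_right _ _]
        _ = M ^ n := by rw [← pow_add, Nat.add_sub_cancel' (mem_range_succ_iff.1 hν)]
    calc ‖a ν * b (n - ν)‖ ≤ ‖a ν‖ * ‖b (n - ν)‖ := norm_mul_le _ _
      _ ≤ (C₁ * L₁ ^ ν * g ν) * (C₂ * L₂ ^ (n - ν) * g (n - ν)) :=
          mul_le_mul (ha ν) (hb _) (norm_nonneg _) ((norm_nonneg _).trans (ha ν))
      _ = C₁ * C₂ * (L₁ ^ ν * L₂ ^ (n - ν)) * (g ν * g (n - ν)) := by ring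
      _ ≤ C₁ * C₂ * M ^ n * (g ν * g (n - ν)) :=
          mul_le_mul_of_nonneg_right (mul_le_mul_of_nonneg_left hL (mul_nonneg hC₁ hC₂))
            (mul_nonneg (hg ν) (hg _))
  calc ‖∑ ν ∈ range (n + 1), a ν * b (n - ν)‖
      ≤ ∑ ν ∈ range (n + 1), C₁ * C₂ * M ^ n * (g ν * g (n - ν)) :=
        (norm_sum_le _ _).trans (sum_le_sum hterm)
    _ = C₁ * C₂ * M ^ n * ∑ ν ∈ range (n + 1), g ν * g (n - ν) := by rw [mul_sum]
    _ ≤ C₁ * C₂ * M ^ n * (K * g n) := by gcongr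
    _ = K * C₁ * C₂ * M ^ n * g n := by ring

theorem stmt6 (p : ℕ) (hp : 1 ≤ p) :
    ∃ K : ℝ, ∀ C₁ C₂ L₁ L₂ : ℝ, 0 < C₁ → 0 < C₂ → 0 < L₁ → 0 < L₂ →
      ∀ a b : ℕ → ℂ,
        (∀ n, ‖a n‖ ≤ C₁ * L₁ ^ n * Real.Gamma ((n : ℝ) / p + 1)) →
        (∀ n, ‖b n‖ ≤ C₂ * L₂ ^ n * Real.Gamma ((n : ℝ) / p + 1)) →
        ∀ n, ‖∑ ν ∈ Finset.range (n + 1), a ν * b (n - ν)‖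
          ≤ K * C₁ * C₂ * max L₁ L₂ ^ n * Real.Gamma ((n : ℝ) / p + 1) := by
  have hp' : (0 : ℝ) < p := by exact_mod_cast hp
  refine ⟨8 / (1 - 2 ^ (-1 / (p : ℝ))), ?_⟩
  intro C₁ C₂ L₁ L₂ hC₁ hC₂ hL₁ hL₂ a b ha hb n
  exact norm_sum_range_mul_le (g := fun m => Real.Gamma ((m : ℝ) / p + 1))
    (fun m => (Real.Gamma_pos_of_pos (by positivity)).le) hC₁.le hC₂.le hL₁.le hL₂.le ha hb
    (Real.sum_range_Gamma_mul_Gamma_le hp' n)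
end

section
/- Let $\alpha,\beta>0$. Then the function $f(t)=t^{\alpha}\,\Gamma(\beta,t)$ on $(0,\infty)$ attains its maximum at a point $t_0$ satisfying $f(t_0)=\tfrac{1}{\alpha}\,t_0^{\alpha+\beta}e^{-t_0}$. Consequently, for every $B>0$ there is a constant $D$ depending only on $p,B$ such that $T^M\,\Gamma\big(\tfrac{n}{p},BT^p\big)\leq D\,B^{-M/p}\,\Gamma\big(\tfrac{n+M}{p}+1\big)$ for all $T>0$ and all integers $n\geq 1$, $M\geq 0$. -/
open MeasureTheory Set

/-- The upper incomplete Gamma function `Γ(b, s) = ∫ t in (s,∞), e^{-t} t^{b-1} dt`. -/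
noncomputable def iGamma (b s : ℝ) : ℝ := ∫ t in Ioi s, Real.exp (-t) * t ^ (b - 1)

/-!
`f(t) = t^α Γ(β, t)` is positive and tends to `0` both at `0⁺` and at `∞`, the latter because
`s^a Γ(b, s) ≤ Γ(a + b, s)` for `s ≥ 0`. Hence `f` attains its maximum at an interior point `t₀`,
where `f'(t₀) = α t₀^(α-1) Γ(β, t₀) - t₀^(α+β-1) e^(-t₀)` vanishes. The same domination with
`s = B T^p`, `a = M/p`, `b = n/p` gives the bound with `D = p`, which absorbs `Γ(x) = Γ(x+1)/x`
for `x ≥ 1/p`.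
-/

open Real Filter Topology

section IncompleteGamma

variable {b s : ℝ}

lemma integrableOn_Ioi_exp_neg_mul_rpow (hb : 0 < b) (hs : 0 ≤ s) :
    IntegrableOn (fun t : ℝ => exp (-t) * t ^ (b - 1)) (Ioi s) :=
  (GammaIntegral_convergent hb).mono_set (Ioi_subset_Ioi hs)

lemma iGamma_zero (hb : 0 < b) : iGamma b 0 = Gamma b :=
  (Gamma_eq_integral hb).symm

lemma iGamma_pos (hb : 0 < b) (hs : 0 ≤ s) : 0 < iGamma b s := by
  have hpos : ∀ t ∈ Ioi s, 0 < exp (-t) * t ^ (b - 1) := fun t ht => by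
    have : 0 < t := hs.trans_lt ht
    positivity
  refine (setIntegral_pos_iff_support_of_nonneg_ae
    ((ae_restrict_mem measurableSet_Ioi).mono fun t ht => (hpos t ht).le)
    (integrableOn_Ioi_exp_neg_mul_rpow hb hs)).2 ?_
  exact (by simp : 0 < volume (Ioi s)).trans_le (measure_mono fun t ht => ⟨(hpos t ht).ne', ht⟩)

lemma iGamma_le_Gamma (hb : 0 < b) (hs : 0 ≤ s) : iGamma b s ≤ Gamma b := by
  rw [← iGamma_zero hb]
  refine setIntegral_mono_set (integrableOn_Ioi_exp_neg_mul_rpow hb le_rfl) ?_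
    (Ioi_subset_Ioi hs).eventuallyLE
  filter_upwards [ae_restrict_mem measurableSet_Ioi] with t (ht : 0 < t)
  positivity

lemma iGamma_eq_Gamma_sub_integral (hb : 0 < b) (hs : 0 ≤ s) :
    iGamma b s = Gamma b - ∫ t in (0 : ℝ)..s, exp (-t) * t ^ (b - 1) := by
  rw [← iGamma_zero hb, iGamma, iGamma,
    ← intervalIntegral.integral_Ioi_sub_Ioi (integrableOn_Ioi_exp_neg_mul_rpow hb le_rfl) hs,
    sub_sub_cancel]

lemma hasDerivAt_iGamma (hb : 0 < b) (hs : 0 < s) :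
    HasDerivAt (iGamma b) (-(exp (-s) * s ^ (b - 1))) s := by
  have hcont : ∀ t > 0, ContinuousAt (fun t : ℝ => exp (-t) * t ^ (b - 1)) t := fun t ht =>
    (continuous_exp.comp continuous_neg).continuousAt.mul
      (continuousAt_rpow_const _ _ (Or.inl ht.ne'))
  have hprim : HasDerivAt (fun u => ∫ t in (0 : ℝ)..u, exp (-t) * t ^ (b - 1))
      (exp (-s) * s ^ (b - 1)) s :=
    intervalIntegral.integral_hasDerivAt_right
      ((intervalIntegrable_iff_integrableOn_Ioc_of_le hs.le).2
        ((integrableOn_Ioi_exp_neg_mul_rpow hb le_rfl).mono_set Ioc_subset_Ioi_self))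
      (ContinuousAt.stronglyMeasurableAtFilter isOpen_Ioi hcont s hs) (hcont s hs)
  refine (hprim.const_sub (Gamma b)).congr_of_eventuallyEq ?_
  filter_upwards [Ioi_mem_nhds hs] with t ht
  exact iGamma_eq_Gamma_sub_integral hb (le_of_lt ht)

lemma continuousOn_iGamma (hb : 0 < b) : ContinuousOn (iGamma b) (Ici 0) :=
  (integrableOn_Ioi_exp_neg_mul_rpow hb le_rfl).continuousOn_Ici_primitive_Ioi

lemma tendsto_iGamma_atTop (hb : 0 < b) : Tendsto (iGamma b) atTop (𝓝 0) := by
  have hinter : ⋂ s : ℝ, Ioi s = ∅ := iInter_eq_empty_iff.2 fun t => ⟨t, lt_irrefl t⟩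
  have h := tendsto_setIntegral_of_antitone (fun s => measurableSet_Ioi)
    (fun s t hst => Ioi_subset_Ioi hst) ⟨0, integrableOn_Ioi_exp_neg_mul_rpow hb le_rfl⟩
  rwa [hinter, Measure.restrict_empty, integral_zero_measure] at h

lemma rpow_mul_iGamma_le_iGamma_add {a : ℝ} (ha : 0 ≤ a) (hb : 0 < b) (hs : 0 ≤ s) :
    s ^ a * iGamma b s ≤ iGamma (a + b) s := by
  rw [iGamma, iGamma, ← integral_const_mul]
  refine setIntegral_mono_on ((integrableOn_Ioi_exp_neg_mul_rpow hb hs).const_mul _)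
    (integrableOn_Ioi_exp_neg_mul_rpow (by linarith) hs) measurableSet_Ioi fun t ht => ?_
  have ht0 : 0 < t := hs.trans_lt ht
  calc s ^ a * (exp (-t) * t ^ (b - 1)) ≤ t ^ a * (exp (-t) * t ^ (b - 1)) := by
        gcongr; exact le_of_lt ht
    _ = exp (-t) * t ^ (a + b - 1) := by
        rw [add_sub_assoc, rpow_add ht0]; ring

end IncompleteGamma

lemma exists_isMaxOn_Ioi_of_tendsto {f : ℝ → ℝ} {a L x : ℝ} (hf : ContinuousOn f (Ioi a))
    (hleft : Tendsto f (𝓝[>] a) (𝓝 L)) (htop : Tendsto f atTop (𝓝 L)) (hx : a < x)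
    (hLx : L < f x) : ∃ t₀ ∈ Ioi a, IsMaxOn f (Ioi a) t₀ := by
  obtain ⟨u, hau, hu⟩ := mem_nhdsGT_iff_exists_Ioo_subset.1 (hleft.eventually (gt_mem_nhds hLx))
  obtain ⟨v, hv⟩ := eventually_atTop.1 (htop.eventually (gt_mem_nhds hLx))
  have hK : Icc (min u x) (max v x) ⊆ Ioi a := fun t ht => (lt_min hau hx).trans_le ht.1
  obtain ⟨t₀, ht₀, hmax⟩ := isCompact_Icc.exists_isMaxOn ⟨x, min_le_right u x, le_max_right v x⟩
    (hf.mono hK)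
  refine ⟨t₀, hK ht₀, fun t (ht : a < t) => ?_⟩
  have hfx : f x ≤ f t₀ := hmax ⟨min_le_right u x, le_max_right v x⟩
  rcases lt_or_ge t (min u x) with htu | htu
  · exact ((hu ⟨ht, htu.trans_le (min_le_left u x)⟩).le).trans hfx
  rcases le_or_gt t (max v x) with htv | htv
  · exact hmax ⟨htu, htv⟩
  · exact (hv t ((le_max_left v x).trans htv.le)).le.trans hfx

section RpowMulIGamma

variable {α β : ℝ}

lemma exists_isMaxOn_rpow_mul_iGamma (hα : 0 < α) (hβ : 0 < β) :
    ∃ t₀ ∈ Ioi (0 : ℝ), IsMaxOn (fun t => t ^ α * iGamma β t) (Ioi 0) t₀ := by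
  have hcont : ContinuousOn (fun t => t ^ α * iGamma β t) (Ici 0) :=
    (continuousOn_id.rpow_const fun _ _ => Or.inr hα.le).mul (continuousOn_iGamma hβ)
  have hleft : Tendsto (fun t => t ^ α * iGamma β t) (𝓝[>] 0) (𝓝 0) := by
    have h := (hcont 0 (mem_Ici.2 le_rfl)).mono Ioi_subset_Ici_self
    rwa [ContinuousWithinAt, zero_rpow hα.ne', zero_mul] at h
  have htop : Tendsto (fun t => t ^ α * iGamma β t) atTop (𝓝 0) := by
    refine tendsto_of_tendsto_of_tendsto_of_le_of_le' tendsto_const_nhds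
      (tendsto_iGamma_atTop (add_pos hα hβ)) ?_ ?_
    all_goals filter_upwards [eventually_ge_atTop 0] with t ht
    · exact mul_nonneg (rpow_nonneg ht α) (iGamma_pos hβ ht).le
    · exact rpow_mul_iGamma_le_iGamma_add hα.le hβ ht
  exact exists_isMaxOn_Ioi_of_tendsto (hcont.mono Ioi_subset_Ici_self) hleft htop one_pos
    (by simpa using iGamma_pos hβ zero_le_one)

lemma rpow_mul_iGamma_eq_of_isLocalMax (hα : α ≠ 0) (hβ : 0 < β) {t₀ : ℝ} (ht₀ : 0 < t₀)
    (hmax : IsLocalMax (fun t => t ^ α * iGamma β t) t₀) :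
    t₀ ^ α * iGamma β t₀ = 1 / α * (t₀ ^ (α + β) * exp (-t₀)) := by
  have hderiv := hmax.hasDerivAt_eq_zero
    ((hasDerivAt_rpow_const (p := α) (Or.inl ht₀.ne')).mul (hasDerivAt_iGamma hβ ht₀))
  have hcrit : α * t₀ ^ (α - 1) * iGamma β t₀ = t₀ ^ α * (exp (-t₀) * t₀ ^ (β - 1)) := by
    linear_combination hderiv
  have hpow : t₀ ^ (α + β) = t₀ * (t₀ ^ α * t₀ ^ (β - 1)) := by
    rw [← rpow_add ht₀, mul_comm, ← rpow_add_one ht₀.ne']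
    ring_nf
  calc t₀ ^ α * iGamma β t₀ = 1 / α * t₀ * (α * t₀ ^ (α - 1) * iGamma β t₀) := by
        nth_rw 1 [← sub_add_cancel α 1, rpow_add_one ht₀.ne']
        field_simp
    _ = 1 / α * (t₀ ^ (α + β) * exp (-t₀)) := by rw [hcrit, hpow]; ring

end RpowMulIGamma

lemma Gamma_le_mul_Gamma_add_one {x c : ℝ} (hx : 0 < x) (hcx : 1 ≤ c * x) :
    Gamma x ≤ c * Gamma (x + 1) := by
  rw [Gamma_add_one hx.ne', ← mul_assoc]
  exact le_mul_of_one_le_left (Gamma_pos_of_pos hx).le hcx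

lemma pow_mul_iGamma_le {p : ℕ} (hp : 1 ≤ p) {B T : ℝ} (hB : 0 < B) (hT : 0 < T) {n : ℕ}
    (hn : 1 ≤ n) (M : ℕ) :
    T ^ M * iGamma ((n : ℝ) / p) (B * T ^ p)
      ≤ p * B ^ (-(M : ℝ) / p) * Gamma (((n : ℝ) + M) / p + 1) := by
  have hp0 : (0 : ℝ) < p := by exact_mod_cast hp
  have hs : 0 < B * T ^ p := by positivity
  have hTM : (T : ℝ) ^ M = B ^ (-(M : ℝ) / p) * (B * T ^ p) ^ ((M : ℝ) / p) := by
    rw [mul_rpow hB.le (by positivity), ← mul_assoc, ← rpow_add hB, neg_div, neg_add_cancel,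
      rpow_zero, one_mul, ← rpow_natCast T p, ← rpow_mul hT.le, mul_div_cancel₀ _ hp0.ne',
      rpow_natCast]
  have hsum : (M : ℝ) / p + n / p = (n + M) / p := by ring
  calc T ^ M * iGamma ((n : ℝ) / p) (B * T ^ p)
      = B ^ (-(M : ℝ) / p) * ((B * T ^ p) ^ ((M : ℝ) / p) * iGamma (n / p) (B * T ^ p)) := by
        rw [hTM]; ring
    _ ≤ B ^ (-(M : ℝ) / p) * Gamma ((n + M) / p) := by
        rw [← hsum]
        gcongr
        exact (rpow_mul_iGamma_le_iGamma_add (by positivity) (by positivity) hs.le).trans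
          (iGamma_le_Gamma (by positivity) hs.le)
    _ ≤ B ^ (-(M : ℝ) / p) * (p * Gamma ((n + M) / p + 1)) := by
        gcongr
        refine Gamma_le_mul_Gamma_add_one (by positivity) ?_
        rw [mul_div_cancel₀ _ hp0.ne']
        have : (1 : ℝ) ≤ n := by exact_mod_cast hn
        linarith [(M.cast_nonneg : (0 : ℝ) ≤ M)]
    _ = p * B ^ (-(M : ℝ) / p) * Gamma ((n + M) / p + 1) := by ring

theorem stmt11 (α β : ℝ) (hα : 0 < α) (hβ : 0 < β) (p : ℕ) (hp : 1 ≤ p)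
    (B : ℝ) (hB : 0 < B) :
    (∃ t₀ ∈ Ioi (0 : ℝ), IsMaxOn (fun t => t ^ α * iGamma β t) (Ioi 0) t₀ ∧
      t₀ ^ α * iGamma β t₀ = 1 / α * (t₀ ^ (α + β) * Real.exp (-t₀))) ∧
    ∃ D : ℝ, ∀ T : ℝ, 0 < T → ∀ n : ℕ, 1 ≤ n → ∀ M : ℕ,
      T ^ M * iGamma ((n : ℝ) / p) (B * T ^ p)
        ≤ D * B ^ (-(M : ℝ) / p) * Real.Gamma (((n : ℝ) + M) / p + 1) := by
  obtain ⟨t₀, ht₀, hmax⟩ := exists_isMaxOn_rpow_mul_iGamma hα hβ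
  exact ⟨⟨t₀, ht₀, hmax, rpow_mul_iGamma_eq_of_isLocalMax hα.ne' hβ ht₀
      (hmax.isLocalMax (Ioi_mem_nhds ht₀))⟩,
    p, fun T hT n hn M => pow_mul_iGamma_le hp hB hT hn M⟩
end

section
/- Let $p\geq 2$ be an integer, $\delta\in(0,\pi/2)$, $\sigma=\sin\delta$, and let $\gamma:[0,\ell]\to\mathbb{C}$ be a piecewise $C^1$ path parametrized by arclength ($|\gamma'(t)|=1$) with $\gamma(\ell)=x$, satisfying $\mathrm{Re}\big(\gamma(t)^{p-1}\gamma'(t)e^{-id}\big)\leq -\sigma\,|\gamma(t)|^{p-1}$ for all $t$, where $d=p\arg\eta$ and $|d|<\delta$. If moreover $|\gamma(t)|\geq L|\eta|$ for all $t$ (with $L\geq 1$), then for every integer $0\leq j\leq p-1$, $\big|e^{x^p/\eta^p}\big|\int_0^\ell\big|e^{-\gamma(t)^p/\eta^p}\big|\,|\gamma(t)|^j\,dt \;\leq\; \frac{1}{p\sigma}\,L^{\,1+j-p}\,|\eta|^{\,j+1}$. -/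
open MeasureTheory Set

/-! Put `s t = -Re (γ t ^ p / η ^ p)`. The integrand is `exp (s t - s ℓ) * ‖γ t‖ ^ j`, and the
descent condition together with `‖γ t‖ ≥ L ‖η‖` gives `‖γ t‖ ^ j ≤ C * s' t`, where `C` is the
claimed bound. Hence the integral is at most `C ∫ exp (s - s ℓ) s' = C (1 - exp (s 0 - s ℓ)) ≤ C`. -/

theorem integral_mul_exp_le_of_le_mul_deriv {a b C : ℝ} {s s' g : ℝ → ℝ} (hab : a ≤ b)
    (hs : ContinuousOn s (Icc a b)) (hs' : ∀ t ∈ Ioo a b, HasDerivAt s (s' t) t)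
    (hg : ContinuousOn g (Icc a b)) (hgs : ∀ t ∈ Ioo a b, g t ≤ C * s' t) :
    ∫ t in a..b, g t * Real.exp (s t) ≤ C * (Real.exp (s b) - Real.exp (s a)) := by
  rw [mul_sub]
  refine intervalIntegral.integral_le_sub_of_hasDeriv_right_of_le hab
    (continuousOn_const.mul (Real.continuous_exp.comp_continuousOn hs))
    (fun t ht => ((hs' t ht).exp.const_mul C).hasDerivWithinAt)
    ((hg.mul (Real.continuous_exp.comp_continuousOn hs)).integrableOn_Icc) fun t ht => ?_
  rw [mul_comm (Real.exp _), ← mul_assoc]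
  exact mul_le_mul_of_nonneg_right (hgs t ht) (Real.exp_pos _).le

theorem Complex.re_div_pow (z η : ℂ) (n : ℕ) :
    (z / η ^ n).re = (z * exp (-(((n : ℝ) * arg η : ℝ) : ℂ) * I)).re / ‖η‖ ^ n := by
  have hpow : η ^ n = ((‖η‖ ^ n : ℝ) : ℂ) * exp (((n : ℝ) * arg η : ℝ) * I) := by
    conv_lhs => rw [← norm_mul_exp_arg_mul_I η]
    rw [mul_pow, ← exp_nat_mul]
    push_cast
    ring_nf
  rw [hpow, neg_mul, exp_neg, ← div_ofReal_re, div_mul_eq_div_div, div_eq_mul_inv _ (exp _),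
    mul_div_right_comm]

theorem norm_pow_le_mul_neg_re_of_descent {p j : ℕ} (hjp : j < p) {σ L : ℝ} (hσ : 0 < σ)
    (hL : 0 < L) {η z w : ℂ} (hη : η ≠ 0) (hz : L * ‖η‖ ≤ ‖z‖)
    (hdesc : (z ^ (p - 1) * w * Complex.exp (-(((p : ℝ) * Complex.arg η : ℝ) : ℂ) * Complex.I)).re
      ≤ -σ * ‖z‖ ^ (p - 1)) :
    ‖z‖ ^ j ≤ 1 / (p * σ) * L ^ (1 + (j : ℤ) - p) * ‖η‖ ^ (j + 1) *
      -((p * z ^ (p - 1) * w / η ^ p).re) := by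
  obtain ⟨k, rfl⟩ : ∃ k, p = j + k + 1 := ⟨p - j - 1, by omega⟩
  set A := -(z ^ (j + k) * w * Complex.exp
    (-((((j + k + 1 : ℕ) : ℝ) * Complex.arg η : ℝ) : ℂ) * Complex.I)).re
  have hA : σ * (‖z‖ ^ k * ‖z‖ ^ j) ≤ A := by
    rw [← pow_add, add_comm k]
    simp only [add_tsub_cancel_right] at hdesc
    linarith
  have hre : -((((j + k + 1 : ℕ) : ℂ) * z ^ (j + k + 1 - 1) * w / η ^ (j + k + 1)).re)
      = (j + k + 1 : ℕ) * A / ‖η‖ ^ (j + k + 1) := by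
    rw [Complex.re_div_pow, mul_assoc, mul_assoc, ← Complex.ofReal_natCast, Complex.re_ofReal_mul]
    simp only [add_tsub_cancel_right, A, mul_assoc]
    ring
  have hzpow : (1 + (j : ℤ) - ((j + k + 1 : ℕ) : ℤ)) = -(k : ℤ) := by push_cast; ring
  have hη0 : 0 < ‖η‖ := norm_pos_iff.mpr hη
  rw [hre, hzpow, zpow_neg, zpow_natCast]
  calc ‖z‖ ^ j ≤ A / (σ * (L * ‖η‖) ^ k) := by
        rw [le_div_iff₀ (by positivity)]
        calc ‖z‖ ^ j * (σ * (L * ‖η‖) ^ k) = σ * ((L * ‖η‖) ^ k * ‖z‖ ^ j) := by ring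
          _ ≤ σ * (‖z‖ ^ k * ‖z‖ ^ j) := by gcongr
          _ ≤ A := hA
    _ = _ := by
        field_simp
        ring

theorem stmt14_general (p : ℕ) (hp : 2 ≤ p) (δ : ℝ) (hδ0 : 0 < δ) (hδ : δ < Real.pi / 2)
    (η : ℂ) (hη : η ≠ 0)
    (ℓ : ℝ) (hℓ : 0 < ℓ) (γ γ' : ℝ → ℂ) (x : ℂ) (hx : γ ℓ = x)
    (hderiv : ∀ t ∈ Icc (0 : ℝ) ℓ, HasDerivWithinAt γ (γ' t) (Icc 0 ℓ) t)
    (hdesc : ∀ t ∈ Icc (0 : ℝ) ℓ,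
      (γ t ^ (p - 1) * γ' t *
          Complex.exp (-(((p : ℝ) * Complex.arg η : ℝ) : ℂ) * Complex.I)).re
        ≤ -Real.sin δ * ‖γ t‖ ^ (p - 1))
    (L : ℝ) (hL : 1 ≤ L) (hlow : ∀ t ∈ Icc (0 : ℝ) ℓ, L * ‖η‖ ≤ ‖γ t‖) :
    ∀ j : ℕ, j ≤ p - 1 →
      ‖Complex.exp (x ^ p / η ^ p)‖ *
          ∫ t in (0 : ℝ)..ℓ, ‖Complex.exp (-(γ t ^ p) / η ^ p)‖ * ‖γ t‖ ^ j
        ≤ 1 / (p * Real.sin δ) * L ^ (1 + (j : ℤ) - (p : ℤ)) * ‖η‖ ^ (j + 1) := by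
  intro j hj
  have hσ : 0 < Real.sin δ :=
    Real.sin_pos_of_pos_of_lt_pi hδ0 (hδ.trans (half_lt_self Real.pi_pos))
  set C := 1 / (p * Real.sin δ) * L ^ (1 + (j : ℤ) - (p : ℤ)) * ‖η‖ ^ (j + 1)
  have hγc : ContinuousOn γ (Icc 0 ℓ) := fun t ht => (hderiv t ht).continuousWithinAt
  have hγ : ∀ t ∈ Ioo 0 ℓ, HasDerivAt γ (γ' t) t := fun t ht =>
    (hderiv t (Ioo_subset_Icc_self ht)).hasDerivAt (Icc_mem_nhds ht.1 ht.2)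
  set s : ℝ → ℝ := fun t => -(γ t ^ p / η ^ p).re
  have hs : ∀ t ∈ Ioo 0 ℓ, HasDerivAt s (-((p * γ t ^ (p - 1) * γ' t / η ^ p).re)) t :=
    fun t ht => (Complex.reCLM.hasFDerivAt.comp_hasDerivAt t
      (((hγ t ht).fun_pow p).div_const _)).neg
  have hintegral := integral_mul_exp_le_of_le_mul_deriv (s := s) (g := fun t => ‖γ t‖ ^ j) hℓ.le
    (by fun_prop) hs (by fun_prop) fun t ht => norm_pow_le_mul_neg_re_of_descent (by omega) hσ
      (by linarith) hη (hlow t (Ioo_subset_Icc_self ht)) (hdesc t (Ioo_subset_Icc_self ht))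
  calc _ = Real.exp (-s ℓ) * ∫ t in (0 : ℝ)..ℓ, ‖γ t‖ ^ j * Real.exp (s t) := by
        simp only [s, Complex.norm_exp, ← hx, neg_div, Complex.neg_re, neg_neg,
          mul_comm (‖γ _‖ ^ j)]
    _ ≤ Real.exp (-s ℓ) * (C * (Real.exp (s ℓ) - Real.exp (s 0))) :=
        mul_le_mul_of_nonneg_left hintegral (Real.exp_pos _).le
    _ = C - C * Real.exp (s 0 - s ℓ) := by
        rw [Real.exp_neg, Real.exp_sub]
        field_simp
    _ ≤ C := sub_le_self _ (by positivity)

theorem stmt14 (p : ℕ) (hp : 2 ≤ p) (δ : ℝ) (hδ0 : 0 < δ) (hδ : δ < Real.pi / 2)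
    (η : ℂ) (hη : η ≠ 0) (hd : |(p : ℝ) * Complex.arg η| < δ)
    (ℓ : ℝ) (hℓ : 0 < ℓ) (γ γ' : ℝ → ℂ) (x : ℂ) (hx : γ ℓ = x)
    (hderiv : ∀ t ∈ Icc (0 : ℝ) ℓ, HasDerivWithinAt γ (γ' t) (Icc 0 ℓ) t)
    (hunit : ∀ t ∈ Icc (0 : ℝ) ℓ, ‖γ' t‖ = 1)
    (hdesc : ∀ t ∈ Icc (0 : ℝ) ℓ,
      (γ t ^ (p - 1) * γ' t *
          Complex.exp (-(((p : ℝ) * Complex.arg η : ℝ) : ℂ) * Complex.I)).re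
        ≤ -Real.sin δ * ‖γ t‖ ^ (p - 1))
    (L : ℝ) (hL : 1 ≤ L) (hlow : ∀ t ∈ Icc (0 : ℝ) ℓ, L * ‖η‖ ≤ ‖γ t‖) :
    ∀ j : ℕ, j ≤ p - 1 →
      ‖Complex.exp (x ^ p / η ^ p)‖ *
          ∫ t in (0 : ℝ)..ℓ, ‖Complex.exp (-(γ t ^ p) / η ^ p)‖ * ‖γ t‖ ^ j
        ≤ 1 / (p * Real.sin δ) * L ^ (1 + (j : ℤ) - (p : ℤ)) * ‖η‖ ^ (j + 1) :=
  stmt14_general p hp δ hδ0 hδ η hη ℓ hℓ γ γ' x hx hderiv hdesc L hL hlow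
end

section
/- Let $p\geq 2$ be an even integer, $\alpha>0$, $\beta\in\mathbb{C}$, $D=\beta/\alpha$, and consider the linear ODE $Z''-\alpha X^{p-1}Z'+\beta X^{p-2}Z=0$ on $\mathbb{C}$. If $D$ is a nonnegative integer congruent to $0$ or $1$ modulo $p$, then this equation admits a polynomial solution of degree exactly $D$, which is even if $D\equiv 0\pmod p$ and odd if $D\equiv 1\pmod p$. -/
/-!
Write `D = r + N p` with `r ∈ {0, 1}`. With `β = α D` the operator
`L Z = Z'' - α X^(p-1) Z' + β X^(p-2) Z` sends `X^m` to `m(m-1) X^(m-2) - α(m - D) X^(m+p-2)`,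
so on `Z = ∑_{j ≤ N} c_j X^(r + j p)` the two sums telescope as soon as
`c_(j+1) m_(j+1) (m_(j+1) - 1) = α (m_j - D) c_j` for `m_j = r + j p`: the lowest term dies since
`r (r - 1) = 0` and the highest since `m_N = D`. The factors `α (m_j - D)` with `j < N` are nonzero,
so `c_N ≠ 0` and `deg Z = D`; all exponents have the parity of `r` because `p` is even.
-/

open Polynomial Finset

variable {K : Type*} [Field K]

noncomputable def odeOp (a b : K) (p : ℕ) : K[X] →ₗ[K] K[X] :=
  derivative ∘ₗ derivative - LinearMap.mulLeft K (C a * X ^ (p - 1)) ∘ₗ derivative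
    + LinearMap.mulLeft K (C b * X ^ (p - 2))

theorem odeOp_apply (a b : K) (p : ℕ) (Z : K[X]) :
    odeOp a b p Z = derivative (derivative Z) - C a * X ^ (p - 1) * derivative Z
      + C b * X ^ (p - 2) * Z := rfl

theorem odeOp_X_pow (a : K) (D : ℕ) {p : ℕ} (hp : 2 ≤ p) (m : ℕ) :
    odeOp a (a * D) p (X ^ m)
      = C ((m : K) * (m - 1)) * X ^ (m - 2) - C (a * (m - D)) * X ^ (m + p - 2) := by
  obtain ⟨q, rfl⟩ : ∃ q, p = q + 2 := ⟨p - 2, by omega⟩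
  rcases m with _ | _ | k
  · simp [odeOp_apply]
  · simp [odeOp_apply, show 0 + 1 + (q + 2) - 2 = q + 1 by omega]
    ring
  · rw [odeOp_apply, derivative_X_pow, derivative_C_mul_X_pow,
      show q + 2 - 1 = q + 1 by omega, show q + 2 - 2 = q by omega,
      show k + 2 + (q + 2) - 2 = (q + 1) + (k + 1) by omega]
    simp only [pow_add, C_mul, C_sub, map_natCast, C_1, Nat.add_sub_cancel]
    push_cast
    ring

noncomputable def solCoeff (a : K) (p r N : ℕ) : ℕ → K
  | 0 => 1
  | j + 1 => a * ((r + j * p : ℕ) - (r + N * p : ℕ))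
      / ((r + (j + 1) * p : ℕ) * ((r + (j + 1) * p : ℕ) - 1)) * solCoeff a p r N j

noncomputable def solPoly (a : K) (p r N : ℕ) : K[X] :=
  ∑ j ∈ range (N + 1), C (solCoeff a p r N j) * X ^ (r + j * p)

section

variable (a : K) {p : ℕ} (r N : ℕ)

theorem natDegree_solPoly_le : (solPoly a p r N).natDegree ≤ r + N * p := by
  refine natDegree_sum_le_of_forall_le _ _ fun j hj => (natDegree_C_mul_X_pow_le _ _).trans ?_
  have : j * p ≤ N * p := Nat.mul_le_mul_right p (by simpa [Nat.lt_succ_iff] using hj)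
  omega

theorem coeff_solPoly_top (hp : 0 < p) :
    (solPoly a p r N).coeff (r + N * p) = solCoeff a p r N N := by
  rw [solPoly, finsetSum_coeff, sum_eq_single N]
  · simp
  · intro j _ hjN
    rw [coeff_C_mul_X_pow, if_neg]
    intro h
    exact hjN (Nat.eq_of_mul_eq_mul_right hp (by omega))
  · simp

theorem eval_neg_solPoly (hp : Even p) (x : K) :
    (solPoly a p r N).eval (-x) = (-1) ^ r * (solPoly a p r N).eval x := by
  simp only [solPoly, eval_finsetSum, mul_sum, eval_C_mul, eval_X_pow]
  refine sum_congr rfl fun j _ => ?_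
  rw [neg_pow, pow_add (-1 : K), (hp.mul_left j).neg_one_pow]
  ring

variable [CharZero K]

theorem solDenom_ne_zero (hp : 2 ≤ p) (j : ℕ) :
    ((r + (j + 1) * p : ℕ) : K) * ((r + (j + 1) * p : ℕ) - 1) ≠ 0 := by
  have h2 : 2 ≤ r + (j + 1) * p := by nlinarith
  refine mul_ne_zero (by exact_mod_cast (by omega)) (sub_ne_zero.mpr ?_)
  exact_mod_cast (by omega)

theorem solCoeff_succ_mul (hp : 2 ≤ p) (j : ℕ) :
    solCoeff a p r N (j + 1) * ((r + (j + 1) * p : ℕ) * ((r + (j + 1) * p : ℕ) - 1))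
      = solCoeff a p r N j * (a * ((r + j * p : ℕ) - (r + N * p : ℕ))) := by
  rw [solCoeff, div_mul_eq_mul_div, div_mul_cancel₀ _ (solDenom_ne_zero r hp j)]
  ring

theorem solCoeff_ne_zero {a : K} (ha : a ≠ 0) (hp : 2 ≤ p) {j : ℕ} (hj : j ≤ N) :
    solCoeff a p r N j ≠ 0 := by
  induction j with
  | zero => simp [solCoeff]
  | succ j ih =>
    have hD : r + j * p ≠ r + N * p := by
      have : j * p < N * p := Nat.mul_lt_mul_of_pos_right (by omega) (by omega)
      omega
    refine mul_ne_zero (div_ne_zero (mul_ne_zero ha ?_) (solDenom_ne_zero r hp j)) (ih (by omega))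
    exact sub_ne_zero.mpr (by exact_mod_cast hD)

theorem solPoly_ne_zero {a : K} (ha : a ≠ 0) (hp : 2 ≤ p) : solPoly a p r N ≠ 0 := fun h =>
  solCoeff_ne_zero r N ha hp le_rfl <| by
    rw [← coeff_solPoly_top a r N (by omega), h, coeff_zero]

theorem natDegree_solPoly {a : K} (ha : a ≠ 0) (hp : 2 ≤ p) :
    (solPoly a p r N).natDegree = r + N * p :=
  natDegree_eq_of_le_of_coeff_ne_zero (natDegree_solPoly_le a r N)
    (by rw [coeff_solPoly_top a r N (by omega)]; exact solCoeff_ne_zero r N ha hp le_rfl)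

theorem odeOp_solPoly (hp : 2 ≤ p) (hr : r ≤ 1) :
    odeOp a (a * (r + N * p : ℕ)) p (solPoly a p r N) = 0 := by
  simp only [solPoly, map_sum, ← smul_eq_C_mul, map_smul, odeOp_X_pow a _ hp, smul_sub,
    sum_sub_distrib, sub_eq_zero]
  -- the `j + 1` term on the left matches the `j` term on the right
  rw [sum_range_succ', sum_range_succ]
  have hbottom : ((r + 0 * p : ℕ) : K) * ((r + 0 * p : ℕ) - 1) = 0 := by
    interval_cases r <;> simp
  simp only [hbottom, sub_self, mul_zero, zero_smul, smul_zero, add_zero]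
  refine sum_congr rfl fun j _ => ?_
  rw [show r + (j + 1) * p - 2 = r + j * p + p - 2 by rw [add_mul, one_mul]; omega,
    smul_smul, smul_smul, solCoeff_succ_mul a r N hp]

end

theorem stmt15 (p : ℕ) (hp : 2 ≤ p) (hpe : Even p) (α : ℝ) (hα : 0 < α) (β : ℂ)
    (D : ℕ) (hD : β = (α : ℂ) * D) (hcong : D % p = 0 ∨ D % p = 1) :
    ∃ Z : Polynomial ℂ, Z ≠ 0 ∧ Z.natDegree = D ∧
      (∀ X : ℂ, (derivative (derivative Z)).eval X
          - (α : ℂ) * X ^ (p - 1) * (derivative Z).eval X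
          + β * X ^ (p - 2) * Z.eval X = 0) ∧
      (D % p = 0 → ∀ X : ℂ, Z.eval (-X) = Z.eval X) ∧
      (D % p = 1 → ∀ X : ℂ, Z.eval (-X) = -Z.eval X) := by
  have hr : D % p ≤ 1 := by omega
  have hD' : D % p + D / p * p = D := Nat.mod_add_div' D p
  have hα' : (α : ℂ) ≠ 0 := by exact_mod_cast hα.ne'
  refine ⟨solPoly (α : ℂ) p (D % p) (D / p), solPoly_ne_zero _ _ hα' hp,
    (natDegree_solPoly _ _ hα' hp).trans hD', fun x => ?_, fun h0 x => ?_, fun h1 x => ?_⟩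
  · have hode := congrArg (eval x) (odeOp_solPoly (α : ℂ) (D % p) (D / p) hp hr)
    rw [hD', ← hD, odeOp_apply] at hode
    simpa using hode
  · rw [eval_neg_solPoly _ _ _ hpe, h0, pow_zero, one_mul]
  · rw [eval_neg_solPoly _ _ _ hpe, h1, pow_one, neg_one_mul]
end
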